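/- Let W = (W0, W1) where W0 is an n×l0 real matrix and W1 is an n×l1 real matrix with the block-diagonal (orthogonal cut basis) structure: the n rows are partitioned into blocks b = 1,...,B, and W1 is block-diagonal across this row partition, i.e. the rows of W1 in block b are zero except in the columns of the b-th column block W_{1b}, and additionally W0^T W1 = 0. Assume W^T W is invertible and each W_{1b}^T W_{1b} is invertible. Let μ ∈ ℝ^n and define η* = (W^T W)^{-1} W^T μ, and write η* = (η0*, η1*) with η1* = (η_{11}*, ..., η_{1B}*) partitioned according to the column blocks of W1. Then for every block b, η_{1b}* = (W_{1b}^T W_{1b})^{-1} W_{1b}^T μ_b, where μ_b is the subvector of μ corresponding to the rows in block b. -/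

import Mathlib

/-!
The normal equations `WᵀW η* = Wᵀμ`, read in the columns of `W1`, decouple: `W0ᵀW1 = 0` removes
`η0*`, and `W1ᵀW1` is block-diagonal with blocks `W_{1b}ᵀW_{1b}`, so the `b`-th block of equations
is `W_{1b}ᵀW_{1b} η_{1b}* = W_{1b}ᵀ μ_b`.
-/

open Matrix

namespace Matrix

section CommRing

variable {R : Type*} [CommRing R]

lemma eq_nonsing_inv_mulVec_of_mulVec_eq {n : Type*} [Fintype n] [DecidableEq n]
    {A : Matrix n n R} (hA : IsUnit A.det) {x y : n → R} (h : A *ᵥ x = y) : x = A⁻¹ *ᵥ y := by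
  rw [← h, mulVec_mulVec, nonsing_inv_mul _ hA, one_mulVec]

lemma mulVec_nonsing_inv_mulVec {n : Type*} [Fintype n] [DecidableEq n]
    {A : Matrix n n R} (hA : IsUnit A.det) (y : n → R) : A *ᵥ (A⁻¹ *ᵥ y) = y := by
  rw [mulVec_mulVec, mul_nonsing_inv _ hA, one_mulVec]

end CommRing

lemma transpose_fromCols_mul_fromCols_mulVec_inr {R m n₁ n₂ : Type*} [CommSemiring R]
    [Fintype m] [Fintype n₁] [Fintype n₂] {A : Matrix m n₁ R} {B : Matrix m n₂ R} (hAB : Aᵀ * B = 0)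
    (x : n₁ ⊕ n₂ → R) :
    (((fromCols A B)ᵀ * fromCols A B) *ᵥ x) ∘ Sum.inr = (Bᵀ * B) *ᵥ (x ∘ Sum.inr) := by
  have hBA : Bᵀ * A = 0 := by simpa using congrArg transpose hAB
  rw [transpose_fromCols, fromRows_mul_fromCols, fromBlocks_mulVec, hBA]
  simp

lemma blockDiagonal'_mulVec_apply {R o : Type*} [NonUnitalNonAssocSemiring R] [Fintype o]
    [DecidableEq o] {m' n' : o → Type*} [∀ i, Fintype (n' i)] (M : ∀ i, Matrix (m' i) (n' i) R)
    (v : (Σ i, n' i) → R) (k : o) (i : m' k) :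
    (blockDiagonal' M *ᵥ v) ⟨k, i⟩ = (M k *ᵥ fun j => v ⟨k, j⟩) i := by
  simp only [mulVec, dotProduct, ← Finset.univ_sigma_univ, Finset.sum_sigma]
  rw [Fintype.sum_eq_single k fun k' hk' =>
    Finset.sum_eq_zero fun j _ => by rw [blockDiagonal'_apply_ne _ _ _ hk'.symm, zero_mul]]
  simp

end Matrix

/-- **Lemma 1 (orthogonal cut basis, independent errors).**
Let `W = (W0, W1)` where `W1` is block-diagonal across a partition of the rows into blocks
`b = 1,…,B` (an orthogonal cut basis) and `W0ᵀ W1 = 0`. Then the block-`b` component of the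
least-squares solution `η* = (WᵀW)⁻¹ Wᵀ μ` is obtained by regressing `μ_b` on `W_{1b}` alone:
`η*_{1b} = (W_{1b}ᵀ W_{1b})⁻¹ W_{1b}ᵀ μ_b`. -/
theorem cut_basis_least_squares_blockwise
    {B l0 : ℕ} (nrows lcols : Fin B → ℕ)
    (W0 : Matrix ((b : Fin B) × Fin (nrows b)) (Fin l0) ℝ)
    (W1b : (b : Fin B) → Matrix (Fin (nrows b)) (Fin (lcols b)) ℝ)
    (W1 : Matrix ((b : Fin B) × Fin (nrows b)) ((b : Fin B) × Fin (lcols b)) ℝ)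
    (hblock : ∀ (b b' : Fin B) (i : Fin (nrows b)) (j : Fin (lcols b')),
      W1 ⟨b, i⟩ ⟨b', j⟩ =
        if h : b = b' then W1b b i (Fin.cast (congrArg lcols h.symm) j) else 0)
    (horth : W0ᵀ * W1 = 0)
    (W : Matrix ((b : Fin B) × Fin (nrows b)) (Fin l0 ⊕ (b : Fin B) × Fin (lcols b)) ℝ)
    (hW : W = Matrix.fromCols W0 W1)
    (hWinv : IsUnit (Wᵀ * W).det)
    (hWbinv : ∀ b, IsUnit ((W1b b)ᵀ * W1b b).det)
    (μ : ((b : Fin B) × Fin (nrows b)) → ℝ)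
    (ηstar : (Fin l0 ⊕ (b : Fin B) × Fin (lcols b)) → ℝ)
    (hη : ηstar = (Wᵀ * W)⁻¹ *ᵥ (Wᵀ *ᵥ μ)) :
    ∀ b : Fin B,
      (fun j : Fin (lcols b) => ηstar (Sum.inr ⟨b, j⟩)) =
        ((W1b b)ᵀ * W1b b)⁻¹ *ᵥ ((W1b b)ᵀ *ᵥ fun i : Fin (nrows b) => μ ⟨b, i⟩) := by
  have hW1 : W1 = blockDiagonal' W1b := by
    ext ⟨b, i⟩ ⟨b', j⟩
    rw [hblock, blockDiagonal'_apply']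
    split_ifs with h
    · subst h; rfl
    · rfl
  have hnormal : (W1ᵀ * W1) *ᵥ (ηstar ∘ Sum.inr) = W1ᵀ *ᵥ μ := by
    rw [← transpose_fromCols_mul_fromCols_mulVec_inr horth, ← hW, hη,
      mulVec_nonsing_inv_mulVec hWinv, hW, transpose_fromCols, fromRows_mulVec, Sum.elim_comp_inr]
  intro b
  refine eq_nonsing_inv_mulVec_of_mulVec_eq (hWbinv b) (funext fun j => ?_)
  have hrow := congrFun hnormal ⟨b, j⟩
  rwa [hW1, blockDiagonal'_transpose, ← blockDiagonal'_mul, blockDiagonal'_mulVec_apply,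
    blockDiagonal'_mulVec_apply] at hrow
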